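/- On a ≺-smooth fitness landscape, any ascent-following local search never unflips a correct variable: if i ∈ φ⊖(x^t) for some assignment x^t in an ascent, then x^s_i = x^t_i for all subsequent assignments x^s (s ≥ t) in the ascent. -/

import Mathlib

/-!
Smoothness says that once every variable strictly below `j` agrees with the optimum `xs`, bit `j`
is set correctly exactly when flipping it loses fitness. By well-founded induction along `≺`, a
correct variable `i` therefore has every `j ⪯ i` set as in `xs`; from such an assignment every
flip of a `j ⪯ i` is strictly worsening, so an ascent only flips bits outside the down-set of `i`
and the agreement with `xs` there, in particular at `i`, persists.
-/

variable {n : ℕ}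

def flipBit (x : Fin n → Bool) (i : Fin n) : Fin n → Bool :=
  Function.update x i (!(x i))

def PrecSmooth (r : Fin n → Fin n → Prop) (f : (Fin n → Bool) → ℤ)
    (xs : Fin n → Bool) : Prop :=
  ∀ (j : Fin n) (x : Fin n → Bool), (∀ i, r i j → x i = xs i) →
    f (Function.update x j (xs j)) > f (Function.update x j (!(xs j)))

/-- `i` is correct at `x` (`i ∈ φ⊖(x)`): every `j ⪯ i` is in the in-map
`φ⁻(x)`, i.e. flipping `j` does not increase fitness. -/
def Correct (r : Fin n → Fin n → Prop) (f : (Fin n → Bool) → ℤ)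
    (x : Fin n → Bool) (i : Fin n) : Prop :=
  ∀ j, (r j i ∨ j = i) → f (flipBit x j) ≤ f x

def atOrBelow {α : Type*} (r : α → α → Prop) (i : α) : Set α :=
  {j | r j i ∨ j = i}

lemma self_mem_atOrBelow {α : Type*} (r : α → α → Prop) (i : α) : i ∈ atOrBelow r i :=
  Or.inr rfl

lemma flipBit_apply_of_ne {x : Fin n → Bool} {j k : Fin n} (h : j ≠ k) : flipBit x k j = x j :=
  Function.update_of_ne h _ x

lemma Set.EqOn.flipBit_of_notMem {x xs : Fin n → Bool} {s : Set (Fin n)} {k : Fin n}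
    (h : Set.EqOn x xs s) (hk : k ∉ s) : Set.EqOn (flipBit x k) xs s := fun j hj => by
  rw [flipBit_apply_of_ne (ne_of_mem_of_not_mem hj hk)]
  exact h hj

section PrecSmooth

variable {r : Fin n → Fin n → Prop} {f : (Fin n → Bool) → ℤ} {xs : Fin n → Bool}

lemma PrecSmooth.flipBit_lt (hs : PrecSmooth r f xs) {x : Fin n → Bool} {j : Fin n}
    (hbelow : ∀ k, r k j → x k = xs k) (hj : x j = xs j) : f (flipBit x j) < f x := by
  have h := hs j x hbelow
  rwa [← hj, Function.update_eq_self] at h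

lemma PrecSmooth.lt_flipBit (hs : PrecSmooth r f xs) {x : Fin n → Bool} {j : Fin n}
    (hbelow : ∀ k, r k j → x k = xs k) (hj : x j ≠ xs j) : f x < f (flipBit x j) := by
  have hxs : xs j = !(x j) := Bool.eq_not.mpr hj.symm
  have h := hs j x hbelow
  rwa [hxs, Bool.not_not, Function.update_eq_self] at h

lemma PrecSmooth.eq_of_flipBit_le (hs : PrecSmooth r f xs) {x : Fin n → Bool} {j : Fin n}
    (hbelow : ∀ k, r k j → x k = xs k) (hle : f (flipBit x j) ≤ f x) : x j = xs j := by
  by_contra hj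
  exact (hs.lt_flipBit hbelow hj).not_ge hle

lemma Correct.of_rel [IsTrans (Fin n) r] {x : Fin n → Bool} {i j : Fin n}
    (hi : Correct r f x i) (hji : r j i) : Correct r f x j := by
  rintro k (hkj | rfl)
  · exact hi k (Or.inl (_root_.trans hkj hji))
  · exact hi k (Or.inl hji)

lemma PrecSmooth.eq_of_correct [IsTrans (Fin n) r] (hs : PrecSmooth r f xs)
    (hwf : WellFounded r) {x : Fin n → Bool} {i : Fin n} (hi : Correct r f x i) :
    x i = xs i := by
  induction i using hwf.induction with
  | _ i ih =>
    exact hs.eq_of_flipBit_le (fun k hki => ih k hki (hi.of_rel hki))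
      (hi i (self_mem_atOrBelow r i))

lemma PrecSmooth.eqOn_atOrBelow_of_correct [IsTrans (Fin n) r] (hs : PrecSmooth r f xs)
    (hwf : WellFounded r) {x : Fin n → Bool} {i : Fin n} (hi : Correct r f x i) :
    Set.EqOn x xs (atOrBelow r i) := by
  rintro j (hji | rfl)
  · exact hs.eq_of_correct hwf (hi.of_rel hji)
  · exact hs.eq_of_correct hwf hi

lemma PrecSmooth.eqOn_atOrBelow_flipBit [IsTrans (Fin n) r] (hs : PrecSmooth r f xs)
    {x : Fin n → Bool} {i k : Fin n} (h : Set.EqOn x xs (atOrBelow r i))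
    (hlt : f x < f (flipBit x k)) : Set.EqOn (flipBit x k) xs (atOrBelow r i) := by
  refine h.flipBit_of_notMem fun hk => (hs.flipBit_lt (fun j hjk => h ?_) (h hk)).not_gt hlt
  rcases hk with hki | rfl
  · exact Or.inl (_root_.trans hjk hki)
  · exact Or.inl hjk

end PrecSmooth

theorem ascent_never_unflips_correct_general
    (f : (Fin n → Bool) → ℤ) (r : Fin n → Fin n → Prop)
    (hr : IsStrictOrder (Fin n) r) (xs : Fin n → Bool)
    (hs : PrecSmooth r f xs) (T : ℕ) (p : ℕ → (Fin n → Bool))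
    (hstep : ∀ t < T, (∃ i, p (t + 1) = flipBit (p t) i) ∧ f (p t) < f (p (t + 1)))
    (t : ℕ) (i : Fin n) (hi : Correct r f (p t) i) :
    ∀ s, t ≤ s → s ≤ T → p s i = p t i := by
  have hwf : WellFounded r := Finite.wellFounded_of_trans_of_irrefl r
  have h₀ := hs.eqOn_atOrBelow_of_correct hwf hi
  have hagree : ∀ s, t ≤ s → s ≤ T → Set.EqOn (p s) xs (atOrBelow r i) := by
    intro s hts
    induction s, hts using Nat.le_induction with
    | base => exact fun _ => h₀
    | succ s _ ih =>
      intro hsT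
      obtain ⟨⟨k, hk⟩, hlt⟩ := hstep s hsT
      rw [hk] at hlt ⊢
      exact hs.eqOn_atOrBelow_flipBit (ih (Nat.le_of_succ_le hsT)) hlt
  intro s hts hsT
  rw [hagree s hts hsT (self_mem_atOrBelow r i), h₀ (self_mem_atOrBelow r i)]

/-- On a `≺`-smooth landscape, an ascent never unflips a correct variable:
once `i ∈ φ⊖(x^t)`, bit `i` keeps its value for the rest of the ascent. -/
theorem ascent_never_unflips_correct
    (f : (Fin n → Bool) → ℤ) (r : Fin n → Fin n → Prop)
    (hr : IsStrictOrder (Fin n) r) (xs : Fin n → Bool)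
    (hs : PrecSmooth r f xs) (T : ℕ) (p : ℕ → (Fin n → Bool))
    (hstep : ∀ t < T, (∃ i, p (t + 1) = flipBit (p t) i) ∧ f (p t) < f (p (t + 1)))
    (t : ℕ) (ht : t ≤ T) (i : Fin n) (hi : Correct r f (p t) i) :
    ∀ s, t ≤ s → s ≤ T → p s i = p t i :=
  ascent_never_unflips_correct_general f r hr xs hs T p hstep t i hi
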